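/- arXiv:1802.09165 — 2 statements merged into one kernel-verified Lean document; each statement's English description precedes it below -/
import Mathlib

section
/- Fix p, λ₁, λ₂ ∈ ℝ and set A = λ₁p − p²/2 and B = (λ₁² + λ₂²)/2. Suppose R̃ : ℝ × ℝ → ℝ is twice continuously differentiable and satisfies the transport equation ∂_t R̃(t,u) + A·∂_u R̃(t,u) + (A+B)·R̃(t,u) = 0 for all (t,u) ∈ ℝ². Define R(t,x,y,z) = R̃(t, p·y + log x)·exp((λ₁+p)y + λ₂z) for t ∈ ℝ, x > 0, y, z ∈ ℝ. Then R satisfies, on ℝ × (0,∞) × ℝ × ℝ: (i) ∂_t R + (1/2)∂²_{yy}R + (1/2)∂²_{zz}R = (1/2)p²x²·∂²_{xx}R + 2p²x·∂_x R + p²·R; (ii) ∂_y R = p·x·∂_x R + (λ₁+p)·R; (iii) ∂_z R = λ₂·R. -/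
/-! Put `u = p y + log x`. Then `R` is `R̃(t, u)` times an exponential, and every derivative of `R`
is that exponential times a combination of `R̃`, `∂ᵤR̃`, `∂ᵤᵤR̃` (through `log x`, the operator
`x ∂ₓ` acts as `∂ᵤ`). Identities (ii) and (iii) are then immediate, and (i) becomes, after
dividing by the exponential, twice the transport equation. -/

open Real

section OneVariable

variable {g : ℝ → ℝ}

lemma hasDerivAt_comp_mul_add_mul_exp (a b c d y : ℝ) (hg : DifferentiableAt ℝ g (a * y + b)) :
    HasDerivAt (fun y => g (a * y + b) * exp (c * y + d))
      ((a * deriv g (a * y + b) + c * g (a * y + b)) * exp (c * y + d)) y := by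
  have hin : HasDerivAt (fun y => a * y + b) a y := by
    simpa using ((hasDerivAt_id y).const_mul a).add_const b
  have hgin : HasDerivAt (fun y => g (a * y + b)) (deriv g (a * y + b) * a) y :=
    hg.hasDerivAt.comp y hin
  have hexp : HasDerivAt (fun y => exp (c * y + d)) (exp (c * y + d) * (c * 1)) y :=
    (((hasDerivAt_id' y).const_mul c).add_const d).exp
  exact (hgin.mul hexp).congr_deriv (by ring)

lemma deriv_deriv_comp_mul_add_mul_exp (hg : ContDiff ℝ 2 g) (a b c d y : ℝ) :
    deriv (deriv fun y => g (a * y + b) * exp (c * y + d)) y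
      = (a ^ 2 * deriv (deriv g) (a * y + b) + 2 * a * c * deriv g (a * y + b)
          + c ^ 2 * g (a * y + b)) * exp (c * y + d) := by
  have hg1 : Differentiable ℝ g := hg.differentiable (by norm_num)
  have hg2 : Differentiable ℝ (deriv g) := hg.differentiable_deriv_two
  -- the first derivative is again of the form `h (a * y + b) * exp (c * y + d)`
  have hfirst : (deriv fun y => g (a * y + b) * exp (c * y + d))
      = fun y => (fun v => a * deriv g v + c * g v) (a * y + b) * exp (c * y + d) :=
    funext fun y => (hasDerivAt_comp_mul_add_mul_exp a b c d y (hg1 _)).deriv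
  have hh : ∀ v, HasDerivAt (fun v => a * deriv g v + c * g v)
      (a * deriv (deriv g) v + c * deriv g v) v := fun v =>
    ((hg2 v).hasDerivAt.const_mul a).add ((hg1 v).hasDerivAt.const_mul c)
  rw [hfirst, (hasDerivAt_comp_mul_add_mul_exp a b c d y (hh _).differentiableAt).deriv,
    (hh _).deriv]
  ring

lemma hasDerivAt_comp_add_log {x : ℝ} (hx : x ≠ 0) (b : ℝ)
    (hg : DifferentiableAt ℝ g (b + log x)) :
    HasDerivAt (fun x => g (b + log x)) (deriv g (b + log x) / x) x :=
  (hg.hasDerivAt.comp x ((hasDerivAt_log hx).const_add b)).congr_deriv (div_eq_mul_inv _ _).symm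

lemma deriv_deriv_comp_add_log (hg : ContDiff ℝ 2 g) (b : ℝ) {x : ℝ} (hx : x ≠ 0) :
    deriv (deriv fun x => g (b + log x)) x
      = (deriv (deriv g) (b + log x) - deriv g (b + log x)) / x ^ 2 := by
  have hg1 : Differentiable ℝ g := hg.differentiable (by norm_num)
  have hg2 : Differentiable ℝ (deriv g) := hg.differentiable_deriv_two
  have hfirst : (deriv fun x => g (b + log x)) =ᶠ[nhds x] fun x => deriv g (b + log x) / x := by
    filter_upwards [isOpen_ne.mem_nhds hx] with x' hx'
    exact (hasDerivAt_comp_add_log hx' b (hg1 _)).deriv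
  have hquot : HasDerivAt (fun x => deriv g (b + log x) / x) _ x :=
    (hasDerivAt_comp_add_log hx b (hg2 _)).div (hasDerivAt_id' x) hx
  rw [hfirst.deriv_eq, hquot.deriv]
  field_simp

lemma deriv_exp_add_mul (c d : ℝ) :
    (deriv fun z => exp (d + c * z)) = fun z => c * exp (d + c * z) :=
  funext fun z => ((((hasDerivAt_id' z).const_mul c).const_add d).exp.congr_deriv (by ring)).deriv

end OneVariable

/-- If `R̃` is a C² solution of the transport equation
`∂ₜR̃ + A ∂ᵤR̃ + (A+B) R̃ = 0`, then
`R(t,x,y,z) = R̃(t, p y + log x) exp((λ₁+p) y + λ₂ z)` solves the linear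
PDE system (i)–(iii) arising from the SPDE for `−∂²ₓₓU` in the
Black–Scholes model. -/
theorem stmt_3 (p l1 l2 A B : ℝ) (hA : A = l1 * p - p ^ 2 / 2)
    (hB : B = (l1 ^ 2 + l2 ^ 2) / 2)
    (Rt : ℝ → ℝ → ℝ)
    (hreg : ContDiff ℝ 2 (fun q : ℝ × ℝ => Rt q.1 q.2))
    (hpde : ∀ t u : ℝ,
      deriv (fun s => Rt s u) t + A * deriv (fun v => Rt t v) u
        + (A + B) * Rt t u = 0)
    (R : ℝ → ℝ → ℝ → ℝ → ℝ)
    (hR : ∀ (t : ℝ) (x : ℝ) (y z : ℝ),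
      R t x y z = Rt t (p * y + Real.log x) * Real.exp ((l1 + p) * y + l2 * z)) :
    ∀ (t : ℝ) (x : ℝ), 0 < x → ∀ (y z : ℝ),
      (deriv (fun s => R s x y z) t
          + (1 / 2) * deriv (deriv (fun y' => R t x y' z)) y
          + (1 / 2) * deriv (deriv (fun z' => R t x y z')) z
        = (1 / 2) * p ^ 2 * x ^ 2 * deriv (deriv (fun x' => R t x' y z)) x
          + 2 * p ^ 2 * x * deriv (fun x' => R t x' y z) x
          + p ^ 2 * R t x y z) ∧
      (deriv (fun y' => R t x y' z) y
        = p * x * deriv (fun x' => R t x' y z) x + (l1 + p) * R t x y z) ∧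
      (deriv (fun z' => R t x y z') z = l2 * R t x y z) := by
  intro t x hx y z
  have hg : ContDiff ℝ 2 (Rt t) := hreg.comp (contDiff_const.prodMk contDiff_id)
  have hg1 : Differentiable ℝ (Rt t) := hg.differentiable (by norm_num)
  simp only [hR, deriv_mul_const_field', deriv_const_mul_field', deriv_exp_add_mul]
  rw [deriv_deriv_comp_mul_add_mul_exp hg,
    (hasDerivAt_comp_mul_add_mul_exp _ _ _ _ _ (hg1 _)).deriv,
    (hasDerivAt_comp_add_log hx.ne' _ (hg1 _)).deriv, deriv_deriv_comp_add_log hg _ hx.ne']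
  refine ⟨?_, ?_, ?_⟩
  · subst hA hB
    field_simp
    linear_combination 2 * hpde t (p * y + log x)
  · field_simp
  · ring
end

section
/- Fix p, λ₁, λ₂ ∈ ℝ and ε ∈ (0,1), and set A = λ₁p − p²/2 and B = (λ₁² + λ₂²)/2. Define R(t,x,y,z) = x^{−(1+ε)}·exp(−(B−εA)t + (λ₁−εp)y + λ₂z) for t ∈ ℝ, x > 0, y, z ∈ ℝ. Then R is strictly positive and satisfies, on ℝ × (0,∞) × ℝ × ℝ: (i) ∂_t R + (1/2)∂²_{yy}R + (1/2)∂²_{zz}R = (1/2)p²x²·∂²_{xx}R + 2p²x·∂_x R + p²·R; (ii) ∂_y R = p·x·∂_x R + (λ₁+p)·R; (iii) ∂_z R = λ₂·R. -/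
open Real Set

/-- The explicit random field
`R(t,x,y,z) = x^{−(1+ε)} exp(−(B−εA)t + (λ₁−εp)y + λ₂z)` is strictly
positive and solves the linear PDE system (i)–(iii) arising from the SPDE
for `−∂²ₓₓU` in the Black–Scholes model. -/
theorem stmt_5 (p l1 l2 ε A B : ℝ) (hε : ε ∈ Set.Ioo (0 : ℝ) 1)
    (hA : A = l1 * p - p ^ 2 / 2) (hB : B = (l1 ^ 2 + l2 ^ 2) / 2)
    (R : ℝ → ℝ → ℝ → ℝ → ℝ)
    (hR : ∀ (t : ℝ) (x : ℝ) (y z : ℝ),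
      R t x y z = x ^ (-(1 + ε)) * Real.exp (-(B - ε * A) * t + (l1 - ε * p) * y + l2 * z)) :
    ∀ (t : ℝ) (x : ℝ), 0 < x → ∀ (y z : ℝ),
      (0 < R t x y z) ∧
      (deriv (fun s => R s x y z) t
          + (1 / 2) * deriv (deriv (fun y' => R t x y' z)) y
          + (1 / 2) * deriv (deriv (fun z' => R t x y z')) z
        = (1 / 2) * p ^ 2 * x ^ 2 * deriv (deriv (fun x' => R t x' y z)) x
          + 2 * p ^ 2 * x * deriv (fun x' => R t x' y z) x
          + p ^ 2 * R t x y z) ∧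
      (deriv (fun y' => R t x y' z) y
        = p * x * deriv (fun x' => R t x' y z) x + (l1 + p) * R t x y z) ∧
      (deriv (fun z' => R t x y z') z = l2 * R t x y z) := by
  intro t x hx y z
  have hx0 : x ≠ 0 := hx.ne'
  set r : ℝ := -(1 + ε) with hr
  set a : ℝ := -(B - ε * A) with ha
  set b : ℝ := l1 - ε * p with hb
  set E : ℝ := Real.exp (a * t + b * y + l2 * z) with hE
  -- t derivative
  have ht : HasDerivAt (fun s => R s x y z) (x ^ r * (E * a)) t := by
    have h1 : HasDerivAt (fun s : ℝ => a * s + b * y + l2 * z) a t := by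
      simpa using (((hasDerivAt_id t).const_mul a).add_const (b * y)).add_const (l2 * z)
    have h2 := h1.exp.const_mul (x ^ r)
    simp only [hR, ← hE] at h2 ⊢
    exact h2
  -- y derivatives
  have hy : ∀ y' : ℝ, HasDerivAt (fun u => R t x u z)
      (x ^ r * (Real.exp (a * t + b * y' + l2 * z) * b)) y' := by
    intro y'
    have h1 : HasDerivAt (fun u : ℝ => a * t + b * u + l2 * z) b y' := by
      simpa using ((((hasDerivAt_id y').const_mul b).const_add (a * t)).add_const (l2 * z))
    have h2 := h1.exp.const_mul (x ^ r)
    simp only [hR]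
    exact h2
  have hy1 : deriv (fun u => R t x u z) = fun y' => b * R t x y' z := by
    funext y'
    rw [(hy y').deriv, hR]
    ring
  have hy2 : deriv (deriv (fun u => R t x u z)) y = b * (x ^ r * (E * b)) := by
    rw [hy1]
    have := ((hy y).const_mul b).deriv
    simp only [← hE] at this
    exact this
  -- z derivatives
  have hz : ∀ z' : ℝ, HasDerivAt (fun w => R t x y w)
      (x ^ r * (Real.exp (a * t + b * y + l2 * z') * l2)) z' := by
    intro z'
    have h1 : HasDerivAt (fun w : ℝ => a * t + b * y + l2 * w) l2 z' := by
      simpa using (((hasDerivAt_id z').const_mul l2).const_add (a * t + b * y))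
    have h2 := h1.exp.const_mul (x ^ r)
    simp only [hR]
    exact h2
  have hz1 : deriv (fun w => R t x y w) = fun z' => l2 * R t x y z' := by
    funext z'
    rw [(hz z').deriv, hR]
    ring
  have hz2 : deriv (deriv (fun w => R t x y w)) z = l2 * (x ^ r * (E * l2)) := by
    rw [hz1]
    have := ((hz z).const_mul l2).deriv
    simp only [← hE] at this
    exact this
  -- x derivatives
  have hxall : ∀ x' : ℝ, x' ≠ 0 →
      HasDerivAt (fun u => R t u y z) (r * x' ^ (r - 1) * E) x' := by
    intro x' hx'
    have h := (Real.hasDerivAt_rpow_const (p := r) (Or.inl hx')).mul_const E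
    simp only [hR, ← hE]
    exact h
  have hdx1 : deriv (fun u => R t u y z) x = r * x ^ (r - 1) * E := (hxall x hx0).deriv
  have heq : deriv (fun u => R t u y z) =ᶠ[nhds x] fun u => r * u ^ (r - 1) * E := by
    filter_upwards [eventually_ne_nhds hx0] with u hu
    exact (hxall u hu).deriv
  have hdx2 : deriv (deriv (fun u => R t u y z)) x = r * ((r - 1) * x ^ (r - 1 - 1)) * E := by
    rw [Filter.EventuallyEq.deriv_eq heq]
    exact (((Real.hasDerivAt_rpow_const (p := r - 1) (Or.inl hx0)).const_mul r).mul_const E).deriv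
  have hRval : R t x y z = x ^ r * E := by rw [hR, ← hE]
  have e1 : x ^ (r - 1) = x ^ r / x := Real.rpow_sub_one hx0 r
  have e2 : x ^ (r - 1 - 1) = x ^ r / x / x := by
    rw [Real.rpow_sub_one hx0, Real.rpow_sub_one hx0]
  refine ⟨?_, ?_, ?_, ?_⟩
  · rw [hRval]
    positivity
  · rw [ht.deriv, hy2, hz2, hdx2, hdx1, hRval, e1, e2, hr, ha, hb, hA, hB]
    field_simp
    ring
  · rw [(hy y).deriv, hdx1, hRval, e1, hr, hb, ← hE]
    field_simp
    ring
  · rw [(hz z).deriv, hRval, ← hE]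
    ring
end
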